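/- arXiv:2503.01536 — 3 statements merged into one kernel-verified Lean document; each statement's English description precedes it below -/
import Mathlib

section
/- (Theorem 1(a)) For every tautology-free CNF formula φ and every partial truth assignment μ over its atoms: μ entails φ (every total assignment extending μ satisfies φ) if and only if μ validates φ (the residual φ|μ equals the constant ⊤). -/
/-- Propositional formulas over atoms of type `α`, built from the constants
`⊤` (`tr`) and `⊥` (`fls`), atoms, negation, conjunction, disjunction,
implication and bi-implication. -/
inductive PForm (α : Type) : Type
  | tr : PForm α
  | fls : PForm α
  | atom : α → PForm α
  | neg : PForm α → PForm α
  | conj : PForm α → PForm α → PForm α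
  | disj : PForm α → PForm α → PForm α
  | impl : PForm α → PForm α → PForm α
  | biimp : PForm α → PForm α → PForm α

namespace PForm

variable {α : Type}

/-- Standard two-valued evaluation under a total truth assignment. -/
def eval (η : α → Bool) : PForm α → Bool
  | tr => true
  | fls => false
  | atom a => η a
  | neg φ => !(eval η φ)
  | conj φ ψ => eval η φ && eval η ψ
  | disj φ ψ => eval η φ || eval η ψ
  | impl φ ψ => !(eval η φ) || eval η ψ
  | biimp φ ψ => eval η φ == eval η ψ

/-- Simplifying negation: `¬⊤ ⇒ ⊥`, `¬⊥ ⇒ ⊤`. -/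
def snot : PForm α → PForm α
  | tr => fls
  | fls => tr
  | φ => neg φ

/-- Simplifying conjunction: `⊤∧φ, φ∧⊤ ⇒ φ`; `⊥∧φ, φ∧⊥ ⇒ ⊥`. -/
def sand : PForm α → PForm α → PForm α
  | tr, ψ => ψ
  | fls, _ => fls
  | φ, tr => φ
  | _, fls => fls
  | φ, ψ => conj φ ψ

/-- Simplifying disjunction: `⊤∨φ, φ∨⊤ ⇒ ⊤`; `⊥∨φ, φ∨⊥ ⇒ φ`. -/
def sor : PForm α → PForm α → PForm α
  | tr, _ => tr
  | fls, ψ => ψ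
  | _, tr => tr
  | φ, fls => φ
  | φ, ψ => disj φ ψ

/-- Simplifying implication: `⊤→φ ⇒ φ`; `⊥→φ ⇒ ⊤`; `φ→⊤ ⇒ ⊤`; `φ→⊥ ⇒ ¬φ`. -/
def simpImp : PForm α → PForm α → PForm α
  | tr, ψ => ψ
  | fls, _ => tr
  | _, tr => tr
  | φ, fls => snot φ
  | φ, ψ => impl φ ψ

/-- Simplifying bi-implication: `⊤↔φ, φ↔⊤ ⇒ φ`; `⊥↔φ, φ↔⊥ ⇒ ¬φ`. -/
def sIff : PForm α → PForm α → PForm α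
  | tr, ψ => ψ
  | fls, ψ => snot ψ
  | φ, tr => φ
  | φ, fls => snot φ
  | φ, ψ => biimp φ ψ

/-- The residual `φ|μ` of `φ` under a partial assignment
`μ : α → Option Bool`: substitute each assigned atom with the corresponding
constant and simplify recursively through the connectives. -/
def residual (μ : α → Option Bool) : PForm α → PForm α
  | tr => tr
  | fls => fls
  | atom a =>
      match μ a with
      | some true => tr
      | some false => fls
      | none => atom a
  | neg φ => snot (residual μ φ)
  | conj φ ψ => sand (residual μ φ) (residual μ ψ)
  | disj φ ψ => sor (residual μ φ) (residual μ ψ)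
  | impl φ ψ => simpImp (residual μ φ) (residual μ ψ)
  | biimp φ ψ => sIff (residual μ φ) (residual μ ψ)

/-- Strong Kleene negation on three-valued `Option Bool` (`none` = unknown). -/
def kneg : Option Bool → Option Bool
  | some b => some (!b)
  | none => none

/-- Strong Kleene conjunction. -/
def kand : Option Bool → Option Bool → Option Bool
  | some false, _ => some false
  | _, some false => some false
  | some true, some true => some true
  | _, _ => none

/-- Strong Kleene disjunction. -/
def kor : Option Bool → Option Bool → Option Bool
  | some true, _ => some true
  | _, some true => some true
  | some false, some false => some false
  | _, _ => none

/-- Strong Kleene bi-implication. -/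
def kiff : Option Bool → Option Bool → Option Bool
  | some a, some b => some (a == b)
  | _, _ => none

/-- Three-valued (strong Kleene) evaluation of a formula under a partial
assignment: assigned atoms get their value, unassigned atoms get `none`. -/
def keval (μ : α → Option Bool) : PForm α → Option Bool
  | tr => some true
  | fls => some false
  | atom a => μ a
  | neg φ => kneg (keval μ φ)
  | conj φ ψ => kand (keval μ φ) (keval μ ψ)
  | disj φ ψ => kor (keval μ φ) (keval μ ψ)
  | impl φ ψ => kor (kneg (keval μ φ)) (keval μ ψ)
  | biimp φ ψ => kiff (keval μ φ) (keval μ ψ)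

/-- The set of atoms occurring in a formula. -/
def atoms : PForm α → Set α
  | tr => ∅
  | fls => ∅
  | atom a => {a}
  | neg φ => atoms φ
  | conj φ ψ => atoms φ ∪ atoms ψ
  | disj φ ψ => atoms φ ∪ atoms ψ
  | impl φ ψ => atoms φ ∪ atoms ψ
  | biimp φ ψ => atoms φ ∪ atoms ψ

/-- The formula corresponding to a literal `(a, polarity)`. -/
def litForm (l : α × Bool) : PForm α :=
  if l.2 then atom l.1 else neg (atom l.1)

/-- The disjunction of a finite list of literals (a clause);
the empty clause is `⊥`. -/
def clauseForm (c : List (α × Bool)) : PForm α :=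
  c.foldr (fun l acc => disj (litForm l) acc) fls

/-- The conjunction of a finite list of clauses (a CNF formula);
the empty CNF is `⊤`. -/
def cnfForm (Γ : List (List (α × Bool))) : PForm α :=
  Γ.foldr (fun c acc => conj (clauseForm c) acc) tr

/-- The cube `⋀μ`: the conjunction of the literals made true by the
partial assignment `μ`. -/
noncomputable def cube [Fintype α] (μ : α → Option Bool) : PForm α :=
  ((Finset.univ : Finset α).toList.filterMap
    (fun a => (μ a).map (fun b => if b then atom a else neg (atom a)))).foldr conj tr

end PForm

/-- A total assignment `η` extends the partial assignment `μ`. -/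
def ExtendsT {α : Type} (μ : α → Option Bool) (η : α → Bool) : Prop :=
  ∀ a b, μ a = some b → η a = b

/-- A partial assignment `μ'` extends the partial assignment `μ`. -/
def ExtendsP {α : Type} (μ μ' : α → Option Bool) : Prop :=
  ∀ a b, μ a = some b → μ' a = some b

/-- `μ` entails `φ`: every total assignment extending `μ` satisfies `φ`. -/
def Entails {α : Type} (μ : α → Option Bool) (φ : PForm α) : Prop :=
  ∀ η : α → Bool, ExtendsT μ η → PForm.eval η φ = true

section Shannon

variable {A B : Type}

/-- Combine total assignments on `A` and on `B` into one on `A ⊕ B`. -/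
def combine (η : A → Bool) (δ : B → Bool) : A ⊕ B → Bool :=
  Sum.elim η δ

/-- View a total assignment on `B` as a partial assignment on `A ⊕ B`. -/
def liftB (δ : B → Bool) : A ⊕ B → Option Bool :=
  Sum.elim (fun _ => none) (fun b => some (δ b))

/-- View a partial assignment on `A` as a partial assignment on `A ⊕ B`. -/
def liftA (μ : A → Option Bool) : A ⊕ B → Option Bool :=
  Sum.elim μ (fun _ => none)

/-- Combine a partial assignment on `A` with a total assignment on `B`. -/
def pcombine (μ : A → Option Bool) (δ : B → Bool) : A ⊕ B → Option Bool :=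
  Sum.elim μ (fun b => some (δ b))

/-- The Shannon expansion of `ψ` with respect to the (finite) atoms `B`:
the disjunction, over all total assignments `δ` on `B`, of the residuals
`ψ|δ`; it contains no atoms of `B`. -/
noncomputable def shannon [Fintype B] [DecidableEq B] (ψ : PForm (A ⊕ B)) : PForm (A ⊕ B) :=
  ((Finset.univ : Finset (B → Bool)).toList.map
    (fun δ => PForm.residual (liftB δ) ψ)).foldr PForm.disj PForm.fls

end Shannon

/-! The simplification rules preserve the value of a formula, so the residual `φ|μ` agrees with
`φ` under every total extension of `μ`; this gives validation ⇒ entailment for any formula.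
Conversely, the residual of a CNF is `⊤` only if every clause contains a literal made true by `μ`.
If some clause `c` has none, give every atom unassigned by `μ` the value falsifying its
occurrence in `c`: this is consistent exactly because `c` is not a tautology, and the resulting
extension of `μ` falsifies `c`, hence the CNF. -/

namespace PForm

variable {α : Type}

section Evaluation

variable (η : α → Bool)

@[simp]
lemma eval_snot (φ : PForm α) : eval η (snot φ) = !eval η φ := by
  cases φ <;> simp [snot, eval]

@[simp]
lemma eval_sand (φ ψ : PForm α) : eval η (sand φ ψ) = (eval η φ && eval η ψ) := by
  cases φ <;> cases ψ <;> simp [sand, eval]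

@[simp]
lemma eval_sor (φ ψ : PForm α) : eval η (sor φ ψ) = (eval η φ || eval η ψ) := by
  cases φ <;> cases ψ <;> simp [sor, eval]

@[simp]
lemma eval_simpImp (φ ψ : PForm α) : eval η (simpImp φ ψ) = (!eval η φ || eval η ψ) := by
  cases φ <;> cases ψ <;> simp [simpImp, eval]

@[simp]
lemma eval_sIff (φ ψ : PForm α) : eval η (sIff φ ψ) = (eval η φ == eval η ψ) := by
  cases φ <;> cases ψ <;> simp [sIff, eval]

lemma eval_residual {μ : α → Option Bool} (hη : ExtendsT μ η) (φ : PForm α) :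
    eval η (residual μ φ) = eval η φ := by
  induction φ with
  | atom a =>
    cases hμ : μ a with
    | none => simp [residual, hμ]
    | some b => cases b <;> simp [residual, eval, hμ, hη a _ hμ]
  | _ => simp_all [residual, eval]

lemma eval_litForm (l : α × Bool) : eval η (litForm l) = (η l.1 == l.2) := by
  cases hl : l.2 <;> simp [litForm, eval, hl]

lemma eval_clauseForm (c : List (α × Bool)) :
    eval η (clauseForm c) = c.any fun l => eval η (litForm l) := by
  induction c with
  | nil => rfl
  | cons l c ih => simp only [clauseForm, List.foldr_cons, eval, List.any_cons] at ih ⊢; rw [ih]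

lemma eval_cnfForm (Γ : List (List (α × Bool))) :
    eval η (cnfForm Γ) = Γ.all fun c => eval η (clauseForm c) := by
  induction Γ with
  | nil => rfl
  | cons c Γ ih => simp only [cnfForm, List.foldr_cons, eval, List.all_cons] at ih ⊢; rw [ih]

end Evaluation

lemma entails_of_residual_eq_tr {μ : α → Option Bool} {φ : PForm α}
    (h : residual μ φ = tr) : Entails μ φ := fun η hη => by
  rw [← eval_residual η hη, h, eval]

lemma sand_eq_tr_iff (φ ψ : PForm α) : sand φ ψ = tr ↔ φ = tr ∧ ψ = tr := by
  cases φ <;> cases ψ <;> simp [sand]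

lemma sor_eq_tr_iff (φ ψ : PForm α) : sor φ ψ = tr ↔ φ = tr ∨ ψ = tr := by
  cases φ <;> cases ψ <;> simp [sor]

section Residual

variable (μ : α → Option Bool)

lemma residual_litForm_eq_tr_iff (l : α × Bool) :
    residual μ (litForm l) = tr ↔ μ l.1 = some l.2 := by
  obtain ⟨a, p⟩ := l
  cases hμ : μ a with
  | none => cases p <;> simp [litForm, residual, snot, hμ]
  | some b => cases p <;> cases b <;> simp [litForm, residual, snot, hμ]

lemma residual_clauseForm_eq_tr_iff (c : List (α × Bool)) :
    residual μ (clauseForm c) = tr ↔ ∃ l ∈ c, μ l.1 = some l.2 := by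
  induction c with
  | nil => simp [clauseForm, residual]
  | cons l c ih =>
    change sor (residual μ (litForm l)) (residual μ (clauseForm c)) = tr ↔ _
    rw [sor_eq_tr_iff, residual_litForm_eq_tr_iff, ih, List.exists_mem_cons_iff]

lemma residual_cnfForm_eq_tr_iff (Γ : List (List (α × Bool))) :
    residual μ (cnfForm Γ) = tr ↔ ∀ c ∈ Γ, residual μ (clauseForm c) = tr := by
  induction Γ with
  | nil => simp [cnfForm, residual]
  | cons c Γ ih =>
    change sand (residual μ (clauseForm c)) (residual μ (cnfForm Γ)) = tr ↔ _
    rw [sand_eq_tr_iff, ih, List.forall_mem_cons]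

end Residual

lemma exists_extendsT_eval_clauseForm_eq_false {μ : α → Option Bool} {c : List (α × Bool)}
    (htf : ¬ ∃ a, (a, true) ∈ c ∧ (a, false) ∈ c) (hμ : ∀ l ∈ c, μ l.1 ≠ some l.2) :
    ∃ η, ExtendsT μ η ∧ eval η (clauseForm c) = false := by
  classical
  refine ⟨fun a => (μ a).getD (decide ((a, false) ∈ c)), fun a b hb => by simp [hb], ?_⟩
  simp only [eval_clauseForm, List.any_eq_false, eval_litForm]
  rintro ⟨a, p⟩ hl
  cases ha : μ a with
  | some b => simpa [ha] using hμ _ hl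
  | none => cases p <;> simp_all

end PForm

/-- Theorem 1(a): For every tautology-free CNF formula `φ` and
every partial assignment `μ`: `μ` entails `φ` (every total assignment extending
`μ` satisfies `φ`) iff `μ` validates `φ` (the residual `φ|μ` equals `⊤`). -/
theorem cnf_entails_iff_validates {α : Type} (Γ : List (List (α × Bool)))
    (htf : ∀ c ∈ Γ, ¬ ∃ a, (a, true) ∈ c ∧ (a, false) ∈ c)
    (μ : α → Option Bool) :
    Entails μ (PForm.cnfForm Γ) ↔ PForm.residual μ (PForm.cnfForm Γ) = PForm.tr := by
  refine ⟨fun hent => ?_, PForm.entails_of_residual_eq_tr⟩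
  rw [PForm.residual_cnfForm_eq_tr_iff]
  intro c hc
  by_contra hres
  rw [PForm.residual_clauseForm_eq_tr_iff, not_exists] at hres
  obtain ⟨η, hη, hfalse⟩ :=
    PForm.exists_extendsT_eval_clauseForm_eq_false (htf c hc) fun l hl => (hres l ⟨hl, ·⟩)
  have hsat := hent η hη
  rw [PForm.eval_cnfForm, List.all_eq_true] at hsat
  exact Bool.false_ne_true (hfalse ▸ hsat c hc)
end

section
/- (Theorem 2, uniqueness of entailment) Let R be any relation between partial truth assignments and propositional formulas such that: (a) whenever R(μ, φ) holds, μ entails φ; (b) for every assignment η that is total on the atoms of φ, R(η, φ) holds iff η satisfies φ; (c) whenever R(μ, φ₁ ∧ φ₂) holds, both R(μ, φ₁) and R(μ, φ₂) hold; and (d) if φ₁ and φ₂ are logically equivalent, then R(μ, φ₁) holds iff R(μ, φ₂) holds. Then for every partial truth assignment μ and every formula φ, R(μ, φ) holds if and only if μ entails φ. -/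
/-!
If `μ` entails `φ`, every model of the cube `⋀μ` satisfies `φ`, so `φ ∧ ⋀μ` is equivalent to
`⋀μ`. As `μ` assigns every atom of `⋀μ` and makes it true, (b) gives `R μ ⋀μ`; (d) transfers
this to `R μ (φ ∧ ⋀μ)`, and (c) yields `R μ φ`.
-/

namespace PForm

variable {α : Type}

lemma kand_eq_some_true {x y : Option Bool} :
    kand x y = some true ↔ x = some true ∧ y = some true := by
  rcases x with _ | _ | _ <;> rcases y with _ | _ | _ <;> simp [kand]

lemma eval_foldr_conj (η : α → Bool) (L : List (PForm α)) :
    eval η (L.foldr conj tr) = true ↔ ∀ x ∈ L, eval η x = true := by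
  induction L with
  | nil => simp [eval]
  | cons x L ih => simp [eval, ih]

lemma keval_foldr_conj (μ : α → Option Bool) (L : List (PForm α)) :
    keval μ (L.foldr conj tr) = some true ↔ ∀ x ∈ L, keval μ x = some true := by
  induction L with
  | nil => simp [keval]
  | cons x L ih => simp [keval, kand_eq_some_true, ih]

lemma atoms_foldr_conj (L : List (PForm α)) :
    atoms (L.foldr conj tr) = ⋃ x ∈ L, atoms x := by
  induction L with
  | nil => simp [atoms]
  | cons x L ih => simp [atoms, ih]

section Cube

variable [Fintype α] {μ : α → Option Bool}

lemma mem_cube_literals {x : PForm α} :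
    x ∈ (Finset.univ : Finset α).toList.filterMap
        (fun a => (μ a).map (fun b => if b then atom a else neg (atom a))) ↔
      ∃ a b, μ a = some b ∧ litForm (a, b) = x := by
  simp [litForm]

lemma eval_cube {η : α → Bool} : eval η (cube μ) = true ↔ ExtendsT μ η := by
  simp only [cube, eval_foldr_conj, mem_cube_literals]
  constructor
  · intro h a b hab
    have := h _ ⟨a, b, hab, rfl⟩
    cases b <;> simpa [litForm, eval] using this
  · rintro h _ ⟨a, b, hab, rfl⟩
    cases b <;> simp [litForm, eval, h a _ hab]

lemma keval_cube : keval μ (cube μ) = some true := by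
  simp only [cube, keval_foldr_conj, mem_cube_literals]
  rintro _ ⟨a, b, hab, rfl⟩
  cases b <;> simp [litForm, keval, kneg, hab]

lemma ne_none_of_mem_atoms_cube {a : α} (ha : a ∈ atoms (cube μ)) : μ a ≠ none := by
  simp only [cube, atoms_foldr_conj, Set.mem_iUnion, mem_cube_literals] at ha
  obtain ⟨_, ⟨c, b, hcb, rfl⟩, ha⟩ := ha
  cases b <;> simp_all [litForm, atoms]

lemma eval_conj_cube_of_entails {φ : PForm α} (h : Entails μ φ) (η : α → Bool) :
    eval η (conj φ (cube μ)) = eval η (cube μ) := by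
  by_cases hη : ExtendsT μ η
  · simp [eval, h η hη]
  · simp [eval, eval_cube.not.mpr hη]

end Cube

end PForm

theorem entailment_unique_general {α : Type} [Fintype α]
    (R : (α → Option Bool) → PForm α → Prop)
    (ha : ∀ μ φ, R μ φ → Entails μ φ)
    (hb : ∀ (μ : α → Option Bool) (φ : PForm α),
      (∀ a ∈ PForm.atoms φ, μ a ≠ none) →
      (R μ φ ↔ PForm.keval μ φ = some true))
    (hc : ∀ μ φ₁ φ₂, R μ (PForm.conj φ₁ φ₂) → R μ φ₁ ∧ R μ φ₂)
    (hd : ∀ (μ : α → Option Bool) (φ₁ φ₂ : PForm α),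
      (∀ η : α → Bool, PForm.eval η φ₁ = PForm.eval η φ₂) →
      (R μ φ₁ ↔ R μ φ₂)) :
    ∀ (μ : α → Option Bool) (φ : PForm α), R μ φ ↔ Entails μ φ := by
  intro μ φ
  refine ⟨ha μ φ, fun hent => ?_⟩
  have hcube : R μ (PForm.cube μ) :=
    (hb μ _ fun _ => PForm.ne_none_of_mem_atoms_cube).mpr PForm.keval_cube
  have hconj : R μ (PForm.conj φ (PForm.cube μ)) :=
    (hd μ _ _ (PForm.eval_conj_cube_of_entails hent)).mpr hcube
  exact (hc μ φ _ hconj).1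

/-- Theorem 2, uniqueness of entailment: let `R` be any relation
between partial assignments and formulas such that (a) `R μ φ` implies that `μ`
entails `φ`; (b) for every assignment total on the atoms of `φ`, `R` holds iff
the assignment satisfies `φ`; (c) `R μ (φ₁ ∧ φ₂)` implies `R μ φ₁` and
`R μ φ₂`; (d) `R` is invariant under logical equivalence. Then `R μ φ` holds
iff `μ` entails `φ`. -/
theorem entailment_unique {α : Type} [Fintype α] [DecidableEq α]
    (R : (α → Option Bool) → PForm α → Prop)
    (ha : ∀ μ φ, R μ φ → Entails μ φ)
    (hb : ∀ (μ : α → Option Bool) (φ : PForm α),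
      (∀ a ∈ PForm.atoms φ, μ a ≠ none) →
      (R μ φ ↔ PForm.keval μ φ = some true))
    (hc : ∀ μ φ₁ φ₂, R μ (PForm.conj φ₁ φ₂) → R μ φ₁ ∧ R μ φ₂)
    (hd : ∀ (μ : α → Option Bool) (φ₁ φ₂ : PForm α),
      (∀ η : α → Bool, PForm.eval η φ₁ = PForm.eval η φ₂) →
      (R μ φ₁ ↔ R μ φ₂)) :
    ∀ (μ : α → Option Bool) (φ : PForm α), R μ φ ↔ Entails μ φ :=
  entailment_unique_general R ha hb hc hd
end

section
/- (Theorem 3) Let ψ be a propositional formula over the disjoint union of atom sets A and B, with B finite, and let μ be a partial truth assignment on A. Then μ validates ∃B.ψ — i.e. there exists a total assignment δ on B such that the residual ψ|(μ ∪ δ) equals the constant ⊤ — if and only if μ validates the Shannon expansion of ψ with respect to B, i.e. the residual of the Shannon expansion under μ equals ⊤. -/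
/-!
The residual is partial evaluation under strong Kleene semantics: evaluating `φ|μ` under `ν`
is evaluating `φ` under `μ` with `ν` filling in the atoms `μ` leaves open, and since the
simplification rules collapse every subformula whose Kleene value is determined to a constant,
`φ|μ = ⊤` exactly when `φ` is Kleene-true under `μ`. The Shannon expansion is a disjunction, so
it is Kleene-true under `μ` iff some `ψ|δ` is, i.e. iff `ψ` is Kleene-true under `μ ∪ δ`.
-/

namespace PForm

variable {α : Type}

@[simp] theorem kand_some_left (b : Bool) (x : Option Bool) :
    kand (some b) x = if b then x else some false := by
  cases b <;> rcases x with _ | _ | _ <;> rfl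

@[simp] theorem kand_some_right (b : Bool) (x : Option Bool) :
    kand x (some b) = if b then x else some false := by
  cases b <;> rcases x with _ | _ | _ <;> rfl

@[simp] theorem kor_some_left (b : Bool) (x : Option Bool) :
    kor (some b) x = if b then some true else x := by
  cases b <;> rcases x with _ | _ | _ <;> rfl

@[simp] theorem kor_some_right (b : Bool) (x : Option Bool) :
    kor x (some b) = if b then some true else x := by
  cases b <;> rcases x with _ | _ | _ <;> rfl

@[simp] theorem kiff_some_left (b : Bool) (x : Option Bool) :
    kiff (some b) x = if b then x else kneg x := by
  cases b <;> rcases x with _ | _ | _ <;> rfl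

@[simp] theorem kiff_some_right (b : Bool) (x : Option Bool) :
    kiff x (some b) = if b then x else kneg x := by
  cases b <;> rcases x with _ | _ | _ <;> rfl

theorem kor_eq_some_true_iff {x y : Option Bool} :
    kor x y = some true ↔ x = some true ∨ y = some true := by
  rcases x with _ | _ | _ <;> rcases y with _ | _ | _ <;> simp [kor]

theorem keval_snot (ν : α → Option Bool) (p : PForm α) :
    keval ν (snot p) = kneg (keval ν p) := by
  cases p <;> rfl

theorem keval_sand (ν : α → Option Bool) (p q : PForm α) :
    keval ν (sand p q) = kand (keval ν p) (keval ν q) := by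
  cases p <;> cases q <;> simp [sand, keval]

theorem keval_sor (ν : α → Option Bool) (p q : PForm α) :
    keval ν (sor p q) = kor (keval ν p) (keval ν q) := by
  cases p <;> cases q <;> simp [sor, keval]

theorem keval_simpImp (ν : α → Option Bool) (p q : PForm α) :
    keval ν (simpImp p q) = kor (kneg (keval ν p)) (keval ν q) := by
  cases p <;> cases q <;> simp [simpImp, keval, snot, kneg]

theorem keval_sIff (ν : α → Option Bool) (p q : PForm α) :
    keval ν (sIff p q) = kiff (keval ν p) (keval ν q) := by
  cases p <;> cases q <;> simp [sIff, keval, snot, kneg]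

theorem keval_residual (μ ν : α → Option Bool) (φ : PForm α) :
    keval ν (residual μ φ) = keval (fun a => (μ a).or (ν a)) φ := by
  induction φ with
  | tr | fls => rfl
  | atom a => rcases h : μ a with _ | _ | _ <;> simp [residual, keval, h]
  | neg p ih => simp [residual, keval, keval_snot, ih]
  | conj p q ih₁ ih₂ => simp [residual, keval, keval_sand, ih₁, ih₂]
  | disj p q ih₁ ih₂ => simp [residual, keval, keval_sor, ih₁, ih₂]
  | impl p q ih₁ ih₂ => simp [residual, keval, keval_simpImp, ih₁, ih₂]
  | biimp p q ih₁ ih₂ => simp [residual, keval, keval_sIff, ih₁, ih₂]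

@[simp] theorem sand_fls_right (φ : PForm α) : sand φ fls = fls := by cases φ <;> rfl

@[simp] theorem sor_tr_right (φ : PForm α) : sor φ tr = tr := by cases φ <;> rfl

@[simp] theorem simpImp_tr_right (φ : PForm α) : simpImp φ tr = tr := by cases φ <;> rfl

theorem residual_eq_of_keval_eq_some (μ : α → Option Bool) (φ : PForm α) {b : Bool}
    (h : keval μ φ = some b) : residual μ φ = if b then tr else fls := by
  induction φ generalizing b with
  | tr | fls => simp_all [keval, residual]
  | atom a => cases b <;> simp_all [keval, residual]
  | neg p ih =>
    rcases h₁ : keval μ p with _ | _ | _ <;> simp_all [keval, kneg, residual, snot]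
  | conj p q ih₁ ih₂ | disj p q ih₁ ih₂ | impl p q ih₁ ih₂ | biimp p q ih₁ ih₂ =>
    rcases h₁ : keval μ p with _ | _ | _ <;> rcases h₂ : keval μ q with _ | _ | _ <;>
      simp_all [keval, kand, kor, kneg, kiff, residual] <;> rfl

theorem residual_eq_tr_iff (μ : α → Option Bool) (φ : PForm α) :
    residual μ φ = tr ↔ keval μ φ = some true :=
  ⟨fun h => by simpa [h, keval, eq_comm] using keval_residual μ μ φ,
    fun h => by simpa using residual_eq_of_keval_eq_some μ φ h⟩

theorem keval_foldr_disj_eq_some_true_iff (ν : α → Option Bool) (L : List (PForm α)) :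
    keval ν (L.foldr disj fls) = some true ↔ ∃ φ ∈ L, keval ν φ = some true := by
  induction L with
  | nil => simp [keval]
  | cons φ L ih => simp [keval, kor_eq_some_true_iff, ih]

end PForm

section Shannon

variable {A B : Type}

theorem liftB_or_liftA (μ : A → Option Bool) (δ : B → Bool) :
    (fun x => (liftB δ x).or (liftA μ x)) = pcombine μ δ := by
  funext x; cases x <;> rfl

theorem keval_shannon_eq_some_true_iff [Fintype B] [DecidableEq B] (ν : A ⊕ B → Option Bool)
    (ψ : PForm (A ⊕ B)) :
    PForm.keval ν (shannon ψ) = some true ↔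
      ∃ δ : B → Bool, PForm.keval ν (PForm.residual (liftB δ) ψ) = some true := by
  simp [shannon, PForm.keval_foldr_disj_eq_some_true_iff]

end Shannon

/-- Theorem 3: for a formula `ψ` over `A ⊕ B` (`B` finite) and
a partial assignment `μ` on `A`: `μ` validates `∃B.ψ` — there is a total
assignment `δ` on `B` with `ψ|(μ ∪ δ) = ⊤` — iff `μ` validates the Shannon
expansion of `ψ` w.r.t. `B`, i.e. the residual of the Shannon expansion under
`μ` equals `⊤`. -/
theorem validates_exists_iff_validates_shannon {A B : Type} [Fintype B] [DecidableEq B]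
    (ψ : PForm (A ⊕ B)) (μ : A → Option Bool) :
    (∃ δ : B → Bool, PForm.residual (pcombine μ δ) ψ = PForm.tr) ↔
    PForm.residual (liftA μ) (shannon ψ) = PForm.tr := by
  rw [PForm.residual_eq_tr_iff, keval_shannon_eq_some_true_iff]
  simp only [PForm.keval_residual, liftB_or_liftA, PForm.residual_eq_tr_iff]
end
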